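/- Let (S,T) be a medium and let m and n be two concise messages transforming a state S. Then Sm = Sn if and only if C(m) = C(n). -/

import Mathlib

open scoped Classical symmDiff

universe u

namespace Media

variable {S : Type u}

/-- The state obtained by applying the message (string of tokens) `m` to the state `s`. -/
def apply (s : S) (m : List (S → S)) : S :=
  m.foldl (fun x τ => τ x) s

/-- The sequence of states `S₀ = s, S₁, …, Sₙ` produced by the message `m` from the state `s`. -/
def produced (s : S) (m : List (S → S)) : List S :=
  m.scanl (fun x τ => τ x) s

/-- `τ'` is a reverse of the token `τ`. -/
def IsReverse (τ τ' : S → S) : Prop :=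
  ∀ P Q : S, P ≠ Q → (τ P = Q ↔ τ' Q = P)

/-- The message `m` is stepwise effective for the state `s`. -/
def StepwiseEffective (s : S) (m : List (S → S)) : Prop :=
  List.Chain' (· ≠ ·) (produced s m)

/-- The message `m` is consistent: it does not contain both a token and its reverse. -/
def Consistent (m : List (S → S)) : Prop :=
  ∀ τ ∈ m, ∀ τ' ∈ m, ¬ IsReverse τ τ'

/-- The message `m` is concise for the state `s`. -/
def Concise (s : S) (m : List (S → S)) : Prop :=
  StepwiseEffective s m ∧ Consistent m ∧ m.Nodup

/-- The message `m` is vacuous: its indices can be partitioned into pairs of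
mutually reverse tokens. -/
def Vacuous (m : List (S → S)) : Prop :=
  ∃ f : Fin m.length → Fin m.length, Function.Involutive f ∧
    (∀ i, f i ≠ i) ∧ ∀ i, IsReverse (m.get i) (m.get (f i))

/-- The message `m` is closed for the state `s`. -/
def Closed (s : S) (m : List (S → S)) : Prop :=
  StepwiseEffective s m ∧ apply s m = s

/-- `(S, T)` is a medium: a token system satisfying axioms [M1] and [M2]. -/
def IsMedium (T : Set (S → S)) : Prop :=
  (∃ a b : S, a ≠ b) ∧ T.Nonempty ∧ (∀ τ ∈ T, τ ≠ id) ∧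
  (∀ P Q : S, P ≠ Q →
    ∃ m : List (S → S), (∀ τ ∈ m, τ ∈ T) ∧ Concise P m ∧ apply P m = Q) ∧
  (∀ (P : S) (m : List (S → S)), (∀ τ ∈ m, τ ∈ T) → Closed P m → Vacuous m)

end Media

open Media

/-!
In a medium every token `τ` has a reverse `τ̃`, and a message `m` stepwise effective for `s` is
undone by `m̃`, the reverses of its tokens in the opposite order. In a vacuous message every token
occurs exactly as often as its reverse.

If `s·m = s·n`, then `m ñ` is closed, hence vacuous by [M2]; since `m` is consistent, for `τ ∈ m`
the reverse `τ̃` must occur in `ñ`, that is `τ ∈ n`. Conversely, if `m` and `n` have the same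
content but `s·m ≠ s·n`, join `s·m` to `s·n` by a concise message `w` using [M1]: the closed
message `m w ñ` is vacuous, yet any token `ω` of `w` occurs in it more often than `ω̃`.
-/

namespace Media

variable {S : Type u}

@[simp] lemma apply_nil (s : S) : apply s [] = s := rfl

@[simp] lemma apply_cons (s : S) (τ : S → S) (m : List (S → S)) :
    apply s (τ :: m) = apply (τ s) m := rfl

lemma apply_append (s : S) (m n : List (S → S)) :
    apply s (m ++ n) = apply (apply s m) n :=
  List.foldl_append ..

@[simp] lemma stepwiseEffective_nil (s : S) : StepwiseEffective s [] :=
  List.isChain_singleton s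

lemma stepwiseEffective_cons {s : S} {τ : S → S} {m : List (S → S)} :
    StepwiseEffective s (τ :: m) ↔ s ≠ τ s ∧ StepwiseEffective (τ s) m := by
  rw [StepwiseEffective, StepwiseEffective, produced, produced, List.scanl_cons]
  show List.IsChain (· ≠ ·) (s :: _) ↔ s ≠ τ s ∧ List.IsChain (· ≠ ·) _
  cases m <;> simp

lemma stepwiseEffective_append {s : S} {m n : List (S → S)} :
    StepwiseEffective s (m ++ n) ↔
      StepwiseEffective s m ∧ StepwiseEffective (apply s m) n := by
  induction m generalizing s with
  | nil => simp
  | cons τ m ih => simp [stepwiseEffective_cons, ih, and_assoc]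

lemma IsReverse.symm {τ τ' : S → S} (h : IsReverse τ τ') : IsReverse τ' τ :=
  fun P Q hPQ => (h Q P hPQ.symm).symm

lemma IsReverse.unique {τ τ' τ'' : S → S} (h' : IsReverse τ τ') (h'' : IsReverse τ τ'') :
    τ' = τ'' := by
  funext Q
  by_cases hQ : τ' Q = Q
  · by_cases hQ'' : τ'' Q = Q
    · rw [hQ, hQ'']
    · exact (h' _ Q hQ'').mp ((h'' _ Q hQ'').mpr rfl)
  · exact ((h'' _ Q hQ).mp ((h' _ Q hQ).mpr rfl)).symm

lemma Vacuous.count_eq {m : List (S → S)} (hv : Vacuous m) {τ τ' : S → S}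
    (h : IsReverse τ τ') : m.count τ = m.count τ' := by
  obtain ⟨f, hf, -, hrev⟩ := hv
  have hcount (σ : S → S) : (Finset.univ.filter fun i => m.get i = σ).card = m.count σ :=
    Fin.card_filter_univ_eq_vector_get_eq_count σ ⟨m, rfl⟩
  rw [← hcount, ← hcount]
  refine Finset.card_nbij' f f ?_ ?_ (fun i _ => hf i) (fun i _ => hf i)
  · intro i hi
    simp only [Finset.coe_filter, Finset.mem_univ, true_and, Set.mem_ofPred_eq] at hi ⊢
    exact (hi ▸ hrev i).unique h
  · intro i hi
    simp only [Finset.coe_filter, Finset.mem_univ, true_and, Set.mem_ofPred_eq] at hi ⊢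
    exact (hi ▸ hrev i).unique h.symm

lemma Vacuous.mem_iff {m : List (S → S)} (hv : Vacuous m) {τ τ' : S → S}
    (h : IsReverse τ τ') : τ ∈ m ↔ τ' ∈ m := by
  rw [← List.count_pos_iff, ← List.count_pos_iff, hv.count_eq h]

def HasReverse (τ : S → S) : Prop :=
  ∃ τ', IsReverse τ τ'

/-- The reverse `τ̃` of a token; a junk value (`τ` itself) when `τ` has no reverse. -/
noncomputable def rev (τ : S → S) : S → S :=
  if h : HasReverse τ then h.choose else τ

lemma HasReverse.isReverse_rev {τ : S → S} (h : HasReverse τ) : IsReverse τ (rev τ) := by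
  rw [rev, dif_pos h]
  exact h.choose_spec

lemma HasReverse.rev_apply_apply {τ : S → S} (h : HasReverse τ) {P : S} (hP : P ≠ τ P) :
    rev τ (τ P) = P :=
  (h.isReverse_rev P (τ P) hP).mp rfl

lemma IsReverse.rev_eq {τ τ' : S → S} (h : IsReverse τ τ') : rev τ = τ' :=
  HasReverse.isReverse_rev ⟨τ', h⟩ |>.unique h

lemma HasReverse.rev_rev {τ : S → S} (h : HasReverse τ) : rev (rev τ) = τ :=
  h.isReverse_rev.symm.rev_eq

lemma HasReverse.rev_inj {σ τ : S → S} (hσ : HasReverse σ) (hτ : HasReverse τ) :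
    rev σ = rev τ ↔ σ = τ :=
  ⟨fun h => by rw [← hσ.rev_rev, h, hτ.rev_rev], congrArg rev⟩

noncomputable def reverseMessage (m : List (S → S)) : List (S → S) :=
  (m.map rev).reverse

lemma count_rev_reverseMessage {m : List (S → S)} (hm : ∀ σ ∈ m, HasReverse σ)
    {τ : S → S} (hτ : HasReverse τ) : (reverseMessage m).count (rev τ) = m.count τ := by
  rw [reverseMessage, List.count_reverse]
  induction m with
  | nil => rfl
  | cons σ m ih =>
    rw [List.forall_mem_cons] at hm
    simp only [List.map_cons, List.count_cons, ih hm.2, beq_iff_eq, hm.1.rev_inj hτ]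

lemma rev_mem_reverseMessage_iff {m : List (S → S)} (hm : ∀ σ ∈ m, HasReverse σ)
    {τ : S → S} (hτ : HasReverse τ) : rev τ ∈ reverseMessage m ↔ τ ∈ m := by
  rw [← List.count_pos_iff, ← List.count_pos_iff, count_rev_reverseMessage hm hτ]

lemma apply_reverseMessage {s : S} {m : List (S → S)} (hm : ∀ σ ∈ m, HasReverse σ)
    (hse : StepwiseEffective s m) : apply (apply s m) (reverseMessage m) = s := by
  induction m generalizing s with
  | nil => rfl
  | cons τ m ih =>
    obtain ⟨hne, hse⟩ := stepwiseEffective_cons.mp hse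
    simp only [reverseMessage, List.map_cons, List.reverse_cons] at ih ⊢
    rw [apply_cons, apply_append, ih (fun σ hσ => hm σ (List.mem_cons_of_mem _ hσ)) hse]
    exact (hm τ (List.mem_cons_self ..)).rev_apply_apply hne

lemma stepwiseEffective_reverseMessage {s : S} {m : List (S → S)}
    (hm : ∀ σ ∈ m, HasReverse σ) (hse : StepwiseEffective s m) :
    StepwiseEffective (apply s m) (reverseMessage m) := by
  induction m generalizing s with
  | nil => simp [reverseMessage]
  | cons τ m ih =>
    obtain ⟨hne, hse⟩ := stepwiseEffective_cons.mp hse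
    have hm' : ∀ σ ∈ m, HasReverse σ := fun σ hσ => hm σ (List.mem_cons_of_mem _ hσ)
    have hrev : rev τ (τ s) = s := (hm τ (List.mem_cons_self ..)).rev_apply_apply hne
    simp only [reverseMessage, List.map_cons, List.reverse_cons] at ih ⊢
    rw [apply_cons, stepwiseEffective_append]
    refine ⟨ih hm' hse, ?_⟩
    rw [← reverseMessage, apply_reverseMessage hm' hse, stepwiseEffective_cons, hrev]
    exact ⟨hne.symm, stepwiseEffective_nil s⟩

lemma closed_append_reverseMessage {s : S} {m n : List (S → S)} (hn : ∀ σ ∈ n, HasReverse σ)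
    (hmse : StepwiseEffective s m) (hnse : StepwiseEffective s n) (h : apply s m = apply s n) :
    Closed s (m ++ reverseMessage n) := by
  refine ⟨stepwiseEffective_append.mpr ⟨hmse, ?_⟩, ?_⟩
  · exact h ▸ stepwiseEffective_reverseMessage hn hnse
  · rw [apply_append, h, apply_reverseMessage hn hnse]

section Medium

variable {T : Set (S → S)}

lemma IsMedium.exists_isReverse (hM : IsMedium T) {τ : S → S} (hτ : τ ∈ T) :
    ∃ τ' ∈ T, IsReverse τ τ' := by
  obtain ⟨-, -, hid, hM1, hM2⟩ := hM
  obtain ⟨P, hP⟩ : ∃ P, τ P ≠ P := by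
    by_contra! h
    exact hid τ hτ (funext h)
  obtain ⟨w, hwT, ⟨hwse, -⟩, hw⟩ := hM1 (τ P) P hP
  -- By [M2] the first token of the closed message `τ w` is paired with a reverse of `τ`.
  have hclosed : Closed P (τ :: w) := ⟨stepwiseEffective_cons.mpr ⟨hP.symm, hwse⟩, hw⟩
  obtain ⟨f, -, -, hrev⟩ :=
    hM2 P (τ :: w) (List.forall_mem_cons.mpr ⟨hτ, hwT⟩) hclosed
  exact ⟨_, List.forall_mem_cons.mpr ⟨hτ, hwT⟩ _ (List.get_mem _ _), hrev ⟨0, by simp⟩⟩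

lemma IsMedium.hasReverse (hM : IsMedium T) {τ : S → S} (hτ : τ ∈ T) : HasReverse τ :=
  let ⟨τ', _, h⟩ := hM.exists_isReverse hτ
  ⟨τ', h⟩

lemma IsMedium.rev_mem (hM : IsMedium T) {τ : S → S} (hτ : τ ∈ T) : rev τ ∈ T := by
  obtain ⟨τ', hτ', h⟩ := hM.exists_isReverse hτ
  rwa [h.rev_eq]

lemma IsMedium.reverseMessage_subset (hM : IsMedium T) {m : List (S → S)}
    (hm : ∀ τ ∈ m, τ ∈ T) : ∀ τ ∈ reverseMessage m, τ ∈ T := by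
  simp only [reverseMessage, List.mem_reverse, List.mem_map]
  rintro _ ⟨σ, hσ, rfl⟩
  exact hM.rev_mem (hm σ hσ)

lemma IsMedium.vacuous_append_reverseMessage (hM : IsMedium T) {s : S} {m n : List (S → S)}
    (hm : ∀ τ ∈ m, τ ∈ T) (hn : ∀ τ ∈ n, τ ∈ T) (hmse : StepwiseEffective s m)
    (hnse : StepwiseEffective s n) (h : apply s m = apply s n) :
    Vacuous (m ++ reverseMessage n) :=
  hM.2.2.2.2 s _ (List.forall_mem_append.mpr ⟨hm, hM.reverseMessage_subset hn⟩)
    (closed_append_reverseMessage (fun σ hσ => hM.hasReverse (hn σ hσ)) hmse hnse h)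

lemma IsMedium.mem_of_apply_eq (hM : IsMedium T) {s : S} {m n : List (S → S)}
    (hm : ∀ τ ∈ m, τ ∈ T) (hn : ∀ τ ∈ n, τ ∈ T) (hmse : StepwiseEffective s m)
    (hmcon : Consistent m) (hnse : StepwiseEffective s n) (h : apply s m = apply s n)
    {τ : S → S} (hτ : τ ∈ m) : τ ∈ n := by
  have hτrev := hM.hasReverse (hm τ hτ)
  have hmem : rev τ ∈ m ++ reverseMessage n :=
    ((hM.vacuous_append_reverseMessage hm hn hmse hnse h).mem_iff hτrev.isReverse_rev).mp
      (List.mem_append_left _ hτ)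
  have hnmem : rev τ ∉ m := fun h' => hmcon τ hτ _ h' hτrev.isReverse_rev
  exact (rev_mem_reverseMessage_iff (fun σ hσ => hM.hasReverse (hn σ hσ)) hτrev).mp
    ((List.mem_append.mp hmem).resolve_left hnmem)

lemma IsMedium.apply_eq_of_perm (hM : IsMedium T) {s : S} {m n : List (S → S)}
    (hm : ∀ τ ∈ m, τ ∈ T) (hn : ∀ τ ∈ n, τ ∈ T) (hmse : StepwiseEffective s m)
    (hnse : StepwiseEffective s n) (hperm : m.Perm n) : apply s m = apply s n := by
  by_contra hne
  obtain ⟨w, hwT, ⟨hwse, hwcon, -⟩, hw⟩ := hM.2.2.2.1 _ _ hne -- axiom [M1]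
  obtain ⟨ω, hω⟩ : ∃ ω, ω ∈ w := by
    cases w with
    | nil => exact absurd hw hne
    | cons ω _ => exact ⟨ω, List.mem_cons_self ..⟩
  have hωrev := hM.hasReverse (hwT ω hω)
  have hnrev : ∀ σ ∈ n, HasReverse σ := fun σ hσ => hM.hasReverse (hn σ hσ)
  have hv : Vacuous (m ++ w ++ reverseMessage n) :=
    hM.vacuous_append_reverseMessage (List.forall_mem_append.mpr ⟨hm, hwT⟩) hn
      (stepwiseEffective_append.mpr ⟨hmse, hwse⟩) hnse (by rw [apply_append, hw])
  have hcount := hv.count_eq hωrev.isReverse_rev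
  have hω_rev : (reverseMessage n).count ω = n.count (rev ω) := by
    conv_lhs => rw [← hωrev.rev_rev]
    exact count_rev_reverseMessage hnrev (hM.hasReverse (hM.rev_mem (hwT ω hω)))
  have hrev_w : w.count (rev ω) = 0 :=
    List.count_eq_zero.mpr fun h => hwcon ω hω _ h hωrev.isReverse_rev
  have hω_w : 0 < w.count ω := List.count_pos_iff.mpr hω
  simp only [List.count_append, hω_rev, count_rev_reverseMessage hnrev hωrev, hrev_w,
    hperm.count_eq] at hcount
  omega

end Medium

end Media

open Media

/-- Theorem 8.4: for two concise messages `m` and `n` transforming a state `s`,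
`s·m = s·n` if and only if `C(m) = C(n)`. -/
theorem apply_eq_iff_content_eq {S : Type u} {T : Set (S → S)}
    (hM : IsMedium T) (s : S) (m n : List (S → S))
    (hm : ∀ τ ∈ m, τ ∈ T) (hn : ∀ τ ∈ n, τ ∈ T)
    (hmc : Concise s m) (hnc : Concise s n) :
    apply s m = apply s n ↔ {τ | τ ∈ m} = {τ | τ ∈ n} := by
  obtain ⟨hmse, hmcon, hmnd⟩ := hmc
  obtain ⟨hnse, hncon, hnnd⟩ := hnc
  constructor
  · intro h
    ext τ
    exact ⟨hM.mem_of_apply_eq hm hn hmse hmcon hnse h,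
      hM.mem_of_apply_eq hn hm hnse hncon hmse h.symm⟩
  · intro h
    exact hM.apply_eq_of_perm hm hn hmse hnse
      ((List.perm_ext_iff_of_nodup hmnd hnnd).mpr (Set.ext_iff.mp h))
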